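/- arXiv:1710.10446 — 4 statements merged into one kernel-verified Lean document; each statement's English description precedes it below -/
import Mathlib

section
/- Let p, p̄ ∈ P be such that 𝔸(p) and 𝔸(p̄) are bijective with bounded inverses and ‖𝔸(p̄)⁻¹‖ ≤ C. Then ‖F(p̄) − F(p)‖_V ≤ C ( ‖𝔸(p̄ − p)‖_{op} · ‖F(p)‖_V + ‖𝔹(p̄ − p)‖_W ), and consequently ‖F(p̄) − F(p)‖_V ≤ C ‖p̄ − p‖_P ( ‖𝔸‖ · ‖F(p)‖_V + ‖𝔹‖ ), so F is continuous at p. -/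
/-! Writing `u = 𝔸(p)⁻¹(ℓ − 𝔹 p)` and `ū = 𝔸(p̄)⁻¹(ℓ − 𝔹 p̄)`, applying `𝔸(p̄)⁻¹` to
`𝔸(p̄) u = 𝔸(p̄ − p) u + ℓ − 𝔹 p` gives `ū − u = 𝔸(p̄)⁻¹(−𝔸(p̄ − p) u − 𝔹(p̄ − p))`;
both estimates follow by bounding operator norms. -/

section PerturbedSolution

variable {𝕜 V W : Type*} [NontriviallyNormedField 𝕜]
  [NormedAddCommGroup V] [NormedSpace 𝕜 V] [NormedAddCommGroup W] [NormedSpace 𝕜 W]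
  {A Abar : V →L[𝕜] W} {Bbar : W →L[𝕜] V} {u : V} {f : W}

theorem perturbed_solution_sub_eq (hBbar : ∀ v, Bbar (Abar v) = v) (hu : A u = f) (g : W) :
    Bbar g - u = Bbar (g - f - (Abar - A) u) := by
  rw [sub_apply, hu, sub_sub_sub_cancel_right, map_sub, hBbar]

theorem norm_perturbed_solution_sub_le (hBbar : ∀ v, Bbar (Abar v) = v) {C : ℝ}
    (hC : ‖Bbar‖ ≤ C) (hu : A u = f) (g : W) :
    ‖Bbar g - u‖ ≤ C * (‖Abar - A‖ * ‖u‖ + ‖g - f‖) := by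
  rw [perturbed_solution_sub_eq hBbar hu]
  calc ‖Bbar (g - f - (Abar - A) u)‖
      ≤ ‖Bbar‖ * ‖g - f - (Abar - A) u‖ := Bbar.le_opNorm _
    _ ≤ C * (‖(Abar - A) u‖ + ‖g - f‖) := by
        gcongr
        · exact (norm_nonneg _).trans hC
        · rw [add_comm]; exact norm_sub_le _ _
    _ ≤ C * (‖Abar - A‖ * ‖u‖ + ‖g - f‖) := by
        gcongr
        · exact (norm_nonneg _).trans hC
        · exact (Abar - A).le_opNorm u

end PerturbedSolution

theorem forward_operator_continuity_estimate_general
    {P V W : Type*} [NormedAddCommGroup P] [NormedSpace ℝ P]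
    [NormedAddCommGroup V] [NormedSpace ℝ V]
    [NormedAddCommGroup W] [NormedSpace ℝ W]
    (𝔸 : P →L[ℝ] V →L[ℝ] W) (𝔹 : P →L[ℝ] W) (ℓ : W)
    (p pbar : P) (B Bbar : W →L[ℝ] V)
    (hBr : ∀ w, 𝔸 p (B w) = w)
    (hBbarl : ∀ v, Bbar (𝔸 pbar v) = v)
    (C : ℝ) (hC : ‖Bbar‖ ≤ C) :
    ‖Bbar (ℓ - 𝔹 pbar) - B (ℓ - 𝔹 p)‖ ≤
        C * (‖𝔸 (pbar - p)‖ * ‖B (ℓ - 𝔹 p)‖ + ‖𝔹 (pbar - p)‖) ∧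
      ‖Bbar (ℓ - 𝔹 pbar) - B (ℓ - 𝔹 p)‖ ≤
        C * ‖pbar - p‖ * (‖𝔸‖ * ‖B (ℓ - 𝔹 p)‖ + ‖𝔹‖) := by
  have first := norm_perturbed_solution_sub_le hBbarl hC (hBr (ℓ - 𝔹 p)) (ℓ - 𝔹 pbar)
  rw [← map_sub, sub_sub_sub_cancel_left, norm_sub_rev (𝔹 p), ← map_sub] at first
  refine ⟨first, first.trans ?_⟩
  have hC0 : 0 ≤ C := (norm_nonneg _).trans hC
  calc C * (‖𝔸 (pbar - p)‖ * ‖B (ℓ - 𝔹 p)‖ + ‖𝔹 (pbar - p)‖)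
      ≤ C * (‖𝔸‖ * ‖pbar - p‖ * ‖B (ℓ - 𝔹 p)‖ + ‖𝔹‖ * ‖pbar - p‖) := by
        gcongr
        · exact 𝔸.le_opNorm _
        · exact 𝔹.le_opNorm _
    _ = C * ‖pbar - p‖ * (‖𝔸‖ * ‖B (ℓ - 𝔹 p)‖ + ‖𝔹‖) := by ring

/-- Continuity estimate (3.10) for the abstract forward operator
`F(p) := 𝔸(p)⁻¹(ℓ − 𝔹(p))`: with `B = 𝔸(p)⁻¹` and `Bbar = 𝔸(p̄)⁻¹`, `‖𝔸(p̄)⁻¹‖ ≤ C`,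
`‖F(p̄) − F(p)‖ ≤ C (‖𝔸(p̄−p)‖ ‖F(p)‖ + ‖𝔹(p̄−p)‖)` and consequently
`‖F(p̄) − F(p)‖ ≤ C ‖p̄−p‖ (‖𝔸‖ ‖F(p)‖ + ‖𝔹‖)`. -/
theorem forward_operator_continuity_estimate
    {P V W : Type*} [NormedAddCommGroup P] [NormedSpace ℝ P]
    [NormedAddCommGroup V] [NormedSpace ℝ V] [CompleteSpace V]
    [NormedAddCommGroup W] [NormedSpace ℝ W] [CompleteSpace W]
    (𝔸 : P →L[ℝ] V →L[ℝ] W) (𝔹 : P →L[ℝ] W) (ℓ : W)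
    (p pbar : P) (B Bbar : W →L[ℝ] V)
    (hBl : ∀ v, B (𝔸 p v) = v) (hBr : ∀ w, 𝔸 p (B w) = w)
    (hBbarl : ∀ v, Bbar (𝔸 pbar v) = v) (hBbarr : ∀ w, 𝔸 pbar (Bbar w) = w)
    (C : ℝ) (hC : ‖Bbar‖ ≤ C) :
    ‖Bbar (ℓ - 𝔹 pbar) - B (ℓ - 𝔹 p)‖ ≤
        C * (‖𝔸 (pbar - p)‖ * ‖B (ℓ - 𝔹 p)‖ + ‖𝔹 (pbar - p)‖) ∧
      ‖Bbar (ℓ - 𝔹 pbar) - B (ℓ - 𝔹 p)‖ ≤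
        C * ‖pbar - p‖ * (‖𝔸‖ * ‖B (ℓ - 𝔹 p)‖ + ‖𝔹‖) :=
  forward_operator_continuity_estimate_general 𝔸 𝔹 ℓ p pbar B Bbar hBr hBbarl C hC
end

section
/- Let p₀ ∈ P be such that 𝔸(p₀) : V → W is bijective with bounded inverse. Then there is a neighborhood of p₀ on which 𝔸(p) remains bijective with bounded inverse, so F is defined near p₀, and F is Fréchet differentiable at p₀ with derivative given by the bounded linear map h ↦ −𝔸(p₀)⁻¹( 𝔸(h)(F(p₀)) + 𝔹(h) ). -/
/-!
Near an invertible `e : V →L W`, inverting `f` is the same as inverting `e⁻¹ ∘ f` in the Banach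
algebra `V →L V`, where the units form an open set and `x ↦ x⁻¹` has derivative
`h ↦ -x⁻¹ h x⁻¹`. Hence `p ↦ 𝔸(p)⁻¹` is defined near `p₀` and differentiable there, and the
product rule applied to `F p = 𝔸(p)⁻¹ (ℓ - 𝔹 p)` gives the formula.
-/

open ContinuousLinearMap

section MapInverse

variable {𝕜 E F : Type*} [NontriviallyNormedField 𝕜]
  [NormedAddCommGroup E] [NormedSpace 𝕜 E] [CompleteSpace E]
  [NormedAddCommGroup F] [NormedSpace 𝕜 F]

/-- The derivative is `h ↦ -(e⁻¹ ∘ h ∘ e⁻¹)`. -/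
theorem hasFDerivAt_map_inverse (e : E ≃L[𝕜] F) :
    HasFDerivAt (inverse : (E →L[𝕜] F) → F →L[𝕜] E)
      (-((compL 𝕜 F E E).flip (e.symm : F →L[𝕜] E) ∘L compL 𝕜 E F E (e.symm : F →L[𝕜] E)))
      (e : E →L[𝕜] F) := by
  set O₁ := (compL 𝕜 F E E).flip (e.symm : F →L[𝕜] E)
  set O₂ := compL 𝕜 E F E (e.symm : F →L[𝕜] E)
  have hsplit : (inverse : (E →L[𝕜] F) → F →L[𝕜] E) = O₁ ∘ Ring.inverse ∘ O₂ :=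
    funext (inverse_eq_ringInverse e)
  have hO₂ : O₂ e = ((1 : (E →L[𝕜] E)ˣ) : E →L[𝕜] E) := by ext; simp [O₂]
  have hring := hasFDerivAt_ringInverse (𝕜 := 𝕜) (1 : (E →L[𝕜] E)ˣ)
  rw [← hO₂] at hring
  rw [hsplit]
  refine (O₁.hasFDerivAt.comp _ (hring.comp _ O₂.hasFDerivAt)).congr_fderiv ?_
  ext h x
  simp [O₁, O₂]

end MapInverse

theorem forward_operator_frechet_derivative_general
    {P V W : Type*} [NormedAddCommGroup P] [NormedSpace ℝ P]
    [NormedAddCommGroup V] [NormedSpace ℝ V] [CompleteSpace V]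
    [NormedAddCommGroup W] [NormedSpace ℝ W]
    (𝔸 : P →L[ℝ] V →L[ℝ] W) (𝔹 : P →L[ℝ] W) (ℓ : W)
    (p₀ : P) (B₀ : W →L[ℝ] V)
    (hB₀l : ∀ v, B₀ (𝔸 p₀ v) = v) (hB₀r : ∀ w, 𝔸 p₀ (B₀ w) = w) :
    ∃ U ∈ nhds p₀, ∃ F : P → V,
      (∀ p ∈ U, ∃ Bp : W →L[ℝ] V,
        (∀ v, Bp (𝔸 p v) = v) ∧ (∀ w, 𝔸 p (Bp w) = w) ∧ F p = Bp (ℓ - 𝔹 p)) ∧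
      HasFDerivAt F (-(B₀.comp (𝔸.flip (B₀ (ℓ - 𝔹 p₀)) + 𝔹))) p₀ := by
  set e₀ : V ≃L[ℝ] W := .equivOfInverse (𝔸 p₀) B₀ hB₀l hB₀r
  have he₀ : (e₀ : V →L[ℝ] W) = 𝔸 p₀ := rfl
  refine ⟨𝔸 ⁻¹' {A | A.IsInvertible},
    𝔸.continuous.continuousAt.preimage_mem_nhds (ContinuousLinearEquiv.nhds e₀),
    fun p ↦ inverse (𝔸 p) (ℓ - 𝔹 p), ?_, ?_⟩
  · rintro p ⟨e, he⟩
    simp only [← he, inverse_equiv]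
    exact ⟨e.symm, e.symm_apply_apply, e.apply_symm_apply, rfl⟩
  · have hinv := (hasFDerivAt_map_inverse e₀).comp p₀ 𝔸.hasFDerivAt
    have he₀symm : (e₀.symm : W →L[ℝ] V) = B₀ := rfl
    have hinv₀ : inverse (𝔸 p₀) = B₀ := by rw [← he₀, inverse_equiv, he₀symm]
    refine (hinv.clm_apply (𝔹.hasFDerivAt.const_sub ℓ)).congr_fderiv ?_
    ext h
    simp [he₀symm, hinv₀, neg_add_eq_sub]

/-- Theorem 3.5: Fréchet differentiability of the abstract forward operator
`F(p) = 𝔸(p)⁻¹(ℓ − 𝔹(p))`.  If `𝔸(p₀)` is bijective with bounded inverse `B₀`, then on a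
neighborhood of `p₀` the operator `𝔸(p)` remains bijective with bounded inverse, so `F` is
defined near `p₀`, and `F` is Fréchet differentiable at `p₀` with derivative
`h ↦ −𝔸(p₀)⁻¹(𝔸(h)(F(p₀)) + 𝔹(h))`. -/
theorem forward_operator_frechet_derivative
    {P V W : Type*} [NormedAddCommGroup P] [NormedSpace ℝ P]
    [NormedAddCommGroup V] [NormedSpace ℝ V] [CompleteSpace V]
    [NormedAddCommGroup W] [NormedSpace ℝ W] [CompleteSpace W]
    (𝔸 : P →L[ℝ] V →L[ℝ] W) (𝔹 : P →L[ℝ] W) (ℓ : W)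
    (p₀ : P) (B₀ : W →L[ℝ] V)
    (hB₀l : ∀ v, B₀ (𝔸 p₀ v) = v) (hB₀r : ∀ w, 𝔸 p₀ (B₀ w) = w) :
    ∃ U ∈ nhds p₀, ∃ F : P → V,
      (∀ p ∈ U, ∃ Bp : W →L[ℝ] V,
        (∀ v, Bp (𝔸 p v) = v) ∧ (∀ w, 𝔸 p (Bp w) = w) ∧ F p = Bp (ℓ - 𝔹 p)) ∧
      HasFDerivAt F (-(B₀.comp (𝔸.flip (B₀ (ℓ - 𝔹 p₀)) + 𝔹))) p₀ :=
  forward_operator_frechet_derivative_general 𝔸 𝔹 ℓ p₀ B₀ hB₀l hB₀r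
end

section
/- Let p, p̄ ∈ P be such that 𝔸(p) and 𝔸(p̄) are bijective with bounded inverses, and define F'(p) h := −𝔸(p)⁻¹( 𝔸(h)(F(p)) + 𝔹(h) ). Then the exact Taylor-remainder identity 𝔸(p) [ F(p) − F(p̄) − F'(p)(p − p̄) ] = 𝔸(p̄ − p) ( F(p̄) − F(p) ) holds. -/
/-- Exact Taylor-remainder identity (key algebraic step of Theorem 3.13): with
`F(p) = 𝔸(p)⁻¹(ℓ − 𝔹(p))` (here `B = 𝔸(p)⁻¹`, `Bbar = 𝔸(p̄)⁻¹`) and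
`F'(p) h = −𝔸(p)⁻¹(𝔸(h)(F(p)) + 𝔹(h))`, one has
`𝔸(p)[F(p) − F(p̄) − F'(p)(p − p̄)] = 𝔸(p̄ − p)(F(p̄) − F(p))`. -/
theorem taylor_remainder_identity
    {P V W : Type*} [NormedAddCommGroup P] [NormedSpace ℝ P]
    [NormedAddCommGroup V] [NormedSpace ℝ V] [CompleteSpace V]
    [NormedAddCommGroup W] [NormedSpace ℝ W] [CompleteSpace W]
    (𝔸 : P →L[ℝ] V →L[ℝ] W) (𝔹 : P →L[ℝ] W) (ℓ : W)
    (p pbar : P) (B Bbar : W →L[ℝ] V)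
    (hBl : ∀ v, B (𝔸 p v) = v) (hBr : ∀ w, 𝔸 p (B w) = w)
    (hBbarl : ∀ v, Bbar (𝔸 pbar v) = v) (hBbarr : ∀ w, 𝔸 pbar (Bbar w) = w) :
    𝔸 p (B (ℓ - 𝔹 p) - Bbar (ℓ - 𝔹 pbar) -
        (-(B (𝔸 (p - pbar) (B (ℓ - 𝔹 p)) + 𝔹 (p - pbar))))) =
      𝔸 (pbar - p) (Bbar (ℓ - 𝔹 pbar) - B (ℓ - 𝔹 p)) := by
  simp only [map_sub, map_add, map_neg, sub_neg_eq_add, ContinuousLinearMap.sub_apply,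
    ContinuousLinearMap.add_apply, hBr, hBbarr]
  abel
end

section
/- Let p, p̄ ∈ P be such that 𝔸(p) and 𝔸(p̄) are bijective with bounded inverses, and define F'(p) h := −𝔸(p)⁻¹( 𝔸(h)(F(p)) + 𝔹(h) ). Then ‖F(p) − F(p̄) − F'(p)(p − p̄)‖_V ≤ ‖𝔸(p)⁻¹‖ · ‖𝔸(p̄ − p)‖_{op} · ‖F(p̄) − F(p)‖_V, and in particular ‖F(p) − F(p̄) − F'(p)(p − p̄)‖_V ≤ ‖𝔸(p)⁻¹‖ · ‖𝔸‖ · ‖p̄ − p‖_P · ‖F(p̄) − F(p)‖_V. -/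
/-- Tangential cone estimate in the `V`-norm (Theorems 3.13 and 3.15, abstract form): with
`F(p) = 𝔸(p)⁻¹(ℓ − 𝔹(p))` (here `B = 𝔸(p)⁻¹`, `Bbar = 𝔸(p̄)⁻¹`) and
`F'(p) h = −𝔸(p)⁻¹(𝔸(h)(F(p)) + 𝔹(h))`, one has
`‖F(p) − F(p̄) − F'(p)(p − p̄)‖ ≤ ‖𝔸(p)⁻¹‖ ‖𝔸(p̄ − p)‖ ‖F(p̄) − F(p)‖`
and in particular
`‖F(p) − F(p̄) − F'(p)(p − p̄)‖ ≤ ‖𝔸(p)⁻¹‖ ‖𝔸‖ ‖p̄ − p‖ ‖F(p̄) − F(p)‖`. -/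
theorem tangential_cone_estimate
    {P V W : Type*} [NormedAddCommGroup P] [NormedSpace ℝ P]
    [NormedAddCommGroup V] [NormedSpace ℝ V] [CompleteSpace V]
    [NormedAddCommGroup W] [NormedSpace ℝ W] [CompleteSpace W]
    (𝔸 : P →L[ℝ] V →L[ℝ] W) (𝔹 : P →L[ℝ] W) (ℓ : W)
    (p pbar : P) (B Bbar : W →L[ℝ] V)
    (hBl : ∀ v, B (𝔸 p v) = v) (hBr : ∀ w, 𝔸 p (B w) = w)
    (hBbarl : ∀ v, Bbar (𝔸 pbar v) = v) (hBbarr : ∀ w, 𝔸 pbar (Bbar w) = w) :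
    ‖B (ℓ - 𝔹 p) - Bbar (ℓ - 𝔹 pbar) -
        (-(B (𝔸 (p - pbar) (B (ℓ - 𝔹 p)) + 𝔹 (p - pbar))))‖ ≤
      ‖B‖ * ‖𝔸 (pbar - p)‖ * ‖Bbar (ℓ - 𝔹 pbar) - B (ℓ - 𝔹 p)‖ ∧
    ‖B (ℓ - 𝔹 p) - Bbar (ℓ - 𝔹 pbar) -
        (-(B (𝔸 (p - pbar) (B (ℓ - 𝔹 p)) + 𝔹 (p - pbar))))‖ ≤
      ‖B‖ * ‖𝔸‖ * ‖pbar - p‖ * ‖Bbar (ℓ - 𝔹 pbar) - B (ℓ - 𝔹 p)‖ := by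
  set u : V := B (ℓ - 𝔹 p) with hu
  set ubar : V := Bbar (ℓ - 𝔹 pbar) with hubar
  set E : V := u - ubar - (-(B (𝔸 (p - pbar) u + 𝔹 (p - pbar)))) with hE
  have hAu : 𝔸 p u = ℓ - 𝔹 p := hBr _
  have hAubar : 𝔸 pbar ubar = ℓ - 𝔹 pbar := hBbarr _
  have h1 : 𝔸 p E = 𝔸 (pbar - p) (ubar - u) := by
    have : 𝔸 p E = 𝔸 p u - 𝔸 p ubar + (𝔸 (p - pbar) u + 𝔹 (p - pbar)) := by
      simp only [hE, sub_neg_eq_add, map_add, map_sub, hBr]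
    rw [this, hAu]
    simp only [map_sub, ContinuousLinearMap.sub_apply]
    have h2 : 𝔸 p ubar - 𝔸 pbar ubar = 𝔸 p ubar - (ℓ - 𝔹 pbar) := by rw [hAubar]
    abel_nf
    rw [hAubar]
    abel
  have key : E = B (𝔸 (pbar - p) (ubar - u)) := by
    rw [← h1, hBl]
  have hnorm : ‖E‖ ≤ ‖B‖ * ‖𝔸 (pbar - p)‖ * ‖ubar - u‖ := by
    rw [key]
    calc ‖B (𝔸 (pbar - p) (ubar - u))‖ ≤ ‖B‖ * ‖𝔸 (pbar - p) (ubar - u)‖ :=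
          B.le_opNorm _
      _ ≤ ‖B‖ * (‖𝔸 (pbar - p)‖ * ‖ubar - u‖) := by
          gcongr; exact (𝔸 (pbar - p)).le_opNorm _
      _ = ‖B‖ * ‖𝔸 (pbar - p)‖ * ‖ubar - u‖ := by ring
  refine ⟨hnorm, hnorm.trans ?_⟩
  have hA : ‖𝔸 (pbar - p)‖ ≤ ‖𝔸‖ * ‖pbar - p‖ := 𝔸.le_opNorm _
  calc ‖B‖ * ‖𝔸 (pbar - p)‖ * ‖ubar - u‖
      ≤ ‖B‖ * (‖𝔸‖ * ‖pbar - p‖) * ‖ubar - u‖ := by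
        gcongr
    _ = ‖B‖ * ‖𝔸‖ * ‖pbar - p‖ * ‖ubar - u‖ := by ring
end
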